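/- Let f ∈ L¹(ℝⁿ) with P := ∫_{ℝⁿ} f(x) dx, and for t > 0 let G(t,·) be a smooth function on ℝⁿ with G(t,·) ∈ L²(ℝⁿ), ∇G(t,·) ∈ L²(ℝⁿ), satisfying ‖∇G(t,·)‖_{L²} ≤ C t^{-n/(4σ)-1/(2σ)} and ‖G(t,·)‖_{L²} ≤ C t^{-n/(4σ)}. Then ‖(G(t,·) ∗ f) - P·G(t,·)‖_{L²} ≤ C'( t^{-n/(4σ)-1/(4σ)}‖f‖_{L¹} + t^{-n/(4σ)}·∫_{|y| ≥ t^{1/(4σ)}} |f(y)| dy ), and consequently t^{n/(4σ)}·‖(G(t,·) ∗ f) - P·G(t,·)‖_{L²} → 0 as t → ∞. -/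

import Mathlib

open MeasureTheory Filter Function
open scoped ENNReal NNReal

lemma sq_iSup_of_monotone (b : ℕ → ℝ≥0∞) (hb : Monotone b) :
    (⨆ k, b k) ^ (2:ℝ) = ⨆ k, (b k) ^ (2:ℝ) := by
  have h1 : Tendsto b atTop (nhds (⨆ k, b k)) := tendsto_atTop_iSup hb
  have hc : Continuous (fun x : ℝ≥0∞ => x ^ (2:ℝ)) := ENNReal.continuous_rpow_const
  have h2 : Tendsto (fun k => (b k) ^ (2:ℝ)) atTop (nhds ((⨆ k, b k) ^ (2:ℝ))) :=
    (hc.tendsto _).comp h1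
  exact tendsto_nhds_unique h2
    (tendsto_atTop_iSup (fun i j hij => ENNReal.rpow_le_rpow (hb hij) (by norm_num)))

lemma minkowski_L2 {α β : Type*} [MeasurableSpace α] [MeasurableSpace β]
    (μ : Measure α) (ν : Measure β) [SigmaFinite μ] [SFinite ν]
    (F : α → β → ℝ≥0∞) (hF : Measurable (uncurry F)) :
    (∫⁻ x, (∫⁻ y, F x y ∂ν) ^ (2:ℝ) ∂μ) ^ (1/2:ℝ) ≤
      ∫⁻ y, (∫⁻ x, (F x y) ^ (2:ℝ) ∂μ) ^ (1/2:ℝ) ∂ν := by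
  have hrpow2 : Continuous (fun x : ℝ≥0∞ => x ^ (2:ℝ)) := ENNReal.continuous_rpow_const
  have hrpowh : Continuous (fun x : ℝ≥0∞ => x ^ (1/2:ℝ)) := ENNReal.continuous_rpow_const
  set R := ∫⁻ y, (∫⁻ x, (F x y) ^ (2:ℝ) ∂μ) ^ (1/2:ℝ) ∂ν with hR
  set I : α → ℝ≥0∞ := fun x => ∫⁻ y, F x y ∂ν with hI
  have hImeas : Measurable I := hF.lintegral_prod_right'
  have hFy : ∀ y, Measurable (fun x => F x y) := fun y =>
    hF.comp (measurable_id.prodMk measurable_const)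
  have hconj : Real.HolderConjugate 2 2 := Real.HolderConjugate.two_two
  set s : ℕ → Set α := spanningSets μ with hs
  set J : ℕ → α → ℝ≥0∞ := fun k => (s k).indicator (fun x => min (I x) k) with hJ
  have hJmeas : ∀ k, Measurable (J k) := fun k =>
    (hImeas.min measurable_const).indicator (measurableSet_spanningSets μ k)
  have hJmono : Monotone J := by
    intro k l hkl x
    by_cases hx : x ∈ s k
    · have hx' : x ∈ s l := monotone_spanningSets μ hkl hx
      simp only [hJ, Set.indicator_of_mem hx, Set.indicator_of_mem hx']
      exact min_le_min le_rfl (by exact_mod_cast hkl)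
    · simp [hJ, Set.indicator_of_notMem hx]
  have hJle : ∀ k x, J k x ≤ I x := by
    intro k x
    by_cases hx : x ∈ s k
    · simpa [hJ, Set.indicator_of_mem hx] using min_le_left (I x) (k:ℝ≥0∞)
    · simp [hJ, Set.indicator_of_notMem hx]
  have hJfin : ∀ k, ∫⁻ x, (J k x) ^ (2:ℝ) ∂μ < ∞ := by
    intro k
    have hle : ∀ x, (J k x) ^ (2:ℝ) ≤ (s k).indicator (fun _ => ((k:ℝ≥0∞)) ^ (2:ℝ)) x := by
      intro x
      by_cases hx : x ∈ s k
      · simp only [hJ, Set.indicator_of_mem hx]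
        exact ENNReal.rpow_le_rpow (min_le_right (I x) (k:ℝ≥0∞)) (by norm_num)
      · simp [hJ, Set.indicator_of_notMem hx]
    calc ∫⁻ x, (J k x) ^ (2:ℝ) ∂μ ≤ ∫⁻ x, (s k).indicator (fun _ => ((k:ℝ≥0∞)) ^ (2:ℝ)) x ∂μ :=
          lintegral_mono hle
      _ = ((k:ℝ≥0∞)) ^ (2:ℝ) * μ (s k) :=
          lintegral_indicator_const (measurableSet_spanningSets μ k) _
      _ < ∞ := ENNReal.mul_lt_top
          (ENNReal.rpow_lt_top_of_nonneg (by norm_num) (ENNReal.natCast_ne_top k))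
          (measure_spanningSets_lt_top μ k)
  have key : ∀ k, (∫⁻ x, (J k x) ^ (2:ℝ) ∂μ) ^ (1/2:ℝ) ≤ R := by
    intro k
    set A := ∫⁻ x, (J k x) ^ (2:ℝ) ∂μ with hA
    have step1 : A ≤ ∫⁻ x, J k x * I x ∂μ := by
      refine lintegral_mono fun x => ?_
      have h2 : (J k x) ^ (2:ℝ) = J k x * J k x := by
        rw [show (2:ℝ) = ((2:ℕ):ℝ) by norm_num, ENNReal.rpow_natCast]; ring
      rw [h2]
      exact mul_le_mul_right (hJle k x) _
    have step2 : ∫⁻ x, J k x * I x ∂μ = ∫⁻ y, ∫⁻ x, J k x * F x y ∂μ ∂ν := by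
      have hJI : ∀ x, J k x * I x = ∫⁻ y, J k x * F x y ∂ν := fun x =>
        (lintegral_const_mul (J k x) (hF.comp (measurable_prodMk_left))).symm
      simp_rw [hJI]
      exact lintegral_lintegral_swap
        (((hJmeas k).comp measurable_fst).mul hF).aemeasurable
    have step3 : ∀ y, ∫⁻ x, J k x * F x y ∂μ ≤
        A ^ (1/2:ℝ) * (∫⁻ x, (F x y) ^ (2:ℝ) ∂μ) ^ (1/2:ℝ) := by
      intro y
      have h := ENNReal.lintegral_mul_le_Lp_mul_Lq μ hconj
        ((hJmeas k).aemeasurable) ((hFy y).aemeasurable)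
      simpa [one_div, hA] using h
    have step4 : A ≤ A ^ (1/2:ℝ) * R := by
      calc A ≤ ∫⁻ y, ∫⁻ x, J k x * F x y ∂μ ∂ν := step2 ▸ step1
        _ ≤ ∫⁻ y, A ^ (1/2:ℝ) * (∫⁻ x, (F x y) ^ (2:ℝ) ∂μ) ^ (1/2:ℝ) ∂ν :=
            lintegral_mono step3
        _ = A ^ (1/2:ℝ) * R := lintegral_const_mul _
            (hrpowh.measurable.comp ((hrpow2.measurable.comp hF).lintegral_prod_left'))
    by_cases hA0 : A = 0
    · simp [hA0]
    · have hAfin : A ≠ ∞ := (hJfin k).ne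
      have h12 : A ^ (1/2:ℝ) * A ^ (1/2:ℝ) = A := by
        rw [← ENNReal.rpow_add _ _ hA0 hAfin]; norm_num
      have hfin2 : A ^ (1/2:ℝ) ≠ ∞ := ENNReal.rpow_ne_top_of_nonneg (by norm_num) hAfin
      have h0 : A ^ (1/2:ℝ) ≠ 0 := by
        simp [ENNReal.rpow_eq_zero_iff, hA0, hAfin]
      have hmul : A ^ (1/2:ℝ) * A ^ (1/2:ℝ) ≤ A ^ (1/2:ℝ) * R := by rw [h12]; exact step4
      exact (ENNReal.mul_le_mul_iff_right h0 hfin2).mp hmul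
  -- pointwise sup of truncations
  have hIsup : ∀ x, (⨆ k, J k x) = I x := by
    intro x
    refine le_antisymm (iSup_le fun k => hJle k x) ?_
    obtain ⟨k0, hk0⟩ : ∃ k, x ∈ s k := by
      have : x ∈ ⋃ k, s k := by rw [hs, iUnion_spanningSets]; trivial
      exact Set.mem_iUnion.mp this
    rcases eq_or_ne (I x) ∞ with h | h
    · rw [h, ← ENNReal.iSup_natCast]
      refine iSup_le fun m => ?_
      have hxm : x ∈ s (max m k0) := monotone_spanningSets μ (le_max_right m k0) hk0
      have hJm : J (max m k0) x = min (I x) ((max m k0 : ℕ) : ℝ≥0∞) := by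
        simp only [hJ, Set.indicator_of_mem hxm]
      calc (m:ℝ≥0∞) ≤ min (I x) ((max m k0 : ℕ) : ℝ≥0∞) := by
            refine le_min ?_ ?_
            · rw [h]; exact le_top
            · exact_mod_cast le_max_left m k0
        _ = J (max m k0) x := hJm.symm
        _ ≤ ⨆ k, J k x := le_iSup (fun k => J k x) (max m k0)
    · obtain ⟨m, hm⟩ := ENNReal.exists_nat_gt h
      have hxm : x ∈ s (max m k0) := monotone_spanningSets μ (le_max_right m k0) hk0
      have hJm : J (max m k0) x = I x := by
        simp only [hJ, Set.indicator_of_mem hxm]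
        exact min_eq_left (le_trans hm.le (by exact_mod_cast le_max_left m k0))
      exact hJm ▸ le_iSup (fun k => J k x) (max m k0)
  have hsqmono : Monotone fun k => fun x => (J k x) ^ (2:ℝ) := fun k l hkl x =>
    ENNReal.rpow_le_rpow (hJmono hkl x) (by norm_num)
  have hsupint : ∫⁻ x, (I x) ^ (2:ℝ) ∂μ = ⨆ k, ∫⁻ x, (J k x) ^ (2:ℝ) ∂μ := by
    rw [← lintegral_iSup (f := fun k x => (J k x) ^ (2:ℝ))
      (fun k => hrpow2.measurable.comp (hJmeas k)) hsqmono]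
    refine lintegral_congr fun x => ?_
    rw [← hIsup x, sq_iSup_of_monotone _ (fun k l hkl => hJmono hkl x)]
  have hsup_le : ∫⁻ x, (I x) ^ (2:ℝ) ∂μ ≤ R ^ (2:ℝ) := by
    rw [hsupint]
    refine iSup_le fun k => ?_
    have := ENNReal.rpow_le_rpow (key k) (by norm_num : (0:ℝ) ≤ 2)
    calc ∫⁻ x, (J k x) ^ (2:ℝ) ∂μ
        = ((∫⁻ x, (J k x) ^ (2:ℝ) ∂μ) ^ (1/2:ℝ)) ^ (2:ℝ) := by
          rw [← ENNReal.rpow_mul]; norm_num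
      _ ≤ R ^ (2:ℝ) := this
  calc (∫⁻ x, (I x) ^ (2:ℝ) ∂μ) ^ (1/2:ℝ) ≤ (R ^ (2:ℝ)) ^ (1/2:ℝ) :=
        ENNReal.rpow_le_rpow hsup_le (by norm_num)
    _ = R := by rw [← ENNReal.rpow_mul]; norm_num

section HELP
variable {n : ℕ}
local notation "E" => EuclideanSpace ℝ (Fin n)

example (φ : E → ℝ≥0∞) (y : E) : ∫⁻ x, φ (x - y) = ∫⁻ x, φ x :=
  lintegral_sub_right_eq_self φ y

example : SigmaFinite (volume : Measure E) := by infer_instance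

-- FTC along segment
example (g : E → ℝ) (hg : ContDiff ℝ (⊤ : ℕ∞) g) (x y : E) :
    g (x - y) - g x = ∫ s in (0:ℝ)..1, (fderiv ℝ g (x - s • y)) (-y) := by
  have hd : ∀ s : ℝ, HasDerivAt (fun s : ℝ => g (x - s • y))
      ((fderiv ℝ g (x - s • y)) (-y)) s := by
    intro s
    have hc : HasDerivAt (fun s : ℝ => x - s • y) (-y) s := by
      simpa using ((hasDerivAt_id s).smul_const y).const_sub x
    simpa [Function.comp_def] using ((hg.differentiable (by simp) (x - s • y)).hasFDerivAt).comp_hasDerivAt s hc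
  have hcont : Continuous fun s : ℝ => (fderiv ℝ g (x - s • y)) (-y) := by
    have h1 : Continuous (fderiv ℝ g) := hg.continuous_fderiv (by simp)
    exact (h1.comp (continuous_const.sub (continuous_id.smul continuous_const))).clm_apply continuous_const
  have := intervalIntegral.integral_eq_sub_of_hasDerivAt (f := fun s : ℝ => g (x - s • y))
    (fun s _ => hd s) ((hcont.intervalIntegrable 0 1))
  simp only [one_smul, zero_smul, sub_zero] at this
  linarith [this]

lemma ftc_seg (g : E → ℝ) (hg : ContDiff ℝ (⊤ : ℕ∞) g) (x y : E) :
    g (x - y) - g x = ∫ s in (0:ℝ)..1, (fderiv ℝ g (x - s • y)) (-y) := by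
  have hd : ∀ s : ℝ, HasDerivAt (fun s : ℝ => g (x - s • y))
      ((fderiv ℝ g (x - s • y)) (-y)) s := by
    intro s
    have hc : HasDerivAt (fun s : ℝ => x - s • y) (-y) s := by
      simpa using ((hasDerivAt_id s).smul_const y).const_sub x
    simpa [Function.comp_def] using ((hg.differentiable (by simp) (x - s • y)).hasFDerivAt).comp_hasDerivAt s hc
  have hcont : Continuous fun s : ℝ => (fderiv ℝ g (x - s • y)) (-y) := by
    have h1 : Continuous (fderiv ℝ g) := hg.continuous_fderiv (by simp)
    exact (h1.comp (continuous_const.sub (continuous_id.smul continuous_const))).clm_apply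
      continuous_const
  have := intervalIntegral.integral_eq_sub_of_hasDerivAt (f := fun s : ℝ => g (x - s • y))
    (fun s _ => hd s) ((hcont.intervalIntegrable 0 1))
  simp only [one_smul, zero_smul, sub_zero] at this
  linarith [this]

lemma trans_L2 (g : E → ℝ) (hg : ContDiff ℝ (⊤ : ℕ∞) g) (y : E) :
    (∫⁻ x, ((‖g (x - y) - g x‖₊ : ℝ≥0∞)) ^ (2:ℝ)) ^ (1/2:ℝ) ≤
      ENNReal.ofReal ‖y‖ * (∫⁻ x, ((‖fderiv ℝ g x‖₊ : ℝ≥0∞)) ^ (2:ℝ)) ^ (1/2:ℝ) := by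
  set ν : Measure ℝ := volume.restrict (Set.Ioc (0:ℝ) 1) with hν
  set F : E → ℝ → ℝ≥0∞ := fun x s => (‖fderiv ℝ g (x - s • y)‖₊ : ℝ≥0∞) * ‖y‖₊ with hF
  have hDcont : Continuous (fderiv ℝ g) := hg.continuous_fderiv (by simp)
  have hFmeas : Measurable (uncurry F) := by
    have hc : Continuous fun p : E × ℝ => (‖fderiv ℝ g (p.1 - p.2 • y)‖₊ : ℝ≥0∞) :=
      ENNReal.continuous_coe.comp (hDcont.comp (continuous_fst.sub (continuous_snd.smul continuous_const))).nnnorm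
    exact (hc.measurable).mul_const _
  -- pointwise bound
  have hpt : ∀ x, (‖g (x - y) - g x‖₊ : ℝ≥0∞) ≤ ∫⁻ s, F x s ∂ν := by
    intro x
    rw [ftc_seg g hg x y, intervalIntegral.integral_of_le (by norm_num : (0:ℝ) ≤ 1)]
    calc (‖∫ s in Set.Ioc (0:ℝ) 1, (fderiv ℝ g (x - s • y)) (-y)‖₊ : ℝ≥0∞)
        ≤ ∫⁻ s in Set.Ioc (0:ℝ) 1, ‖(fderiv ℝ g (x - s • y)) (-y)‖₊ :=
          enorm_integral_le_lintegral_enorm _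
      _ ≤ ∫⁻ s, F x s ∂ν := by
          refine lintegral_mono fun s => ?_
          have h1 : ‖(fderiv ℝ g (x - s • y)) (-y)‖₊ ≤ ‖fderiv ℝ g (x - s • y)‖₊ * ‖y‖₊ := by
            simpa [nnnorm_neg] using (fderiv ℝ g (x - s • y)).le_opNNNorm (-y)
          simp only [hF]
          calc ((‖(fderiv ℝ g (x - s • y)) (-y)‖₊ : ℝ≥0∞))
              ≤ ((‖fderiv ℝ g (x - s • y)‖₊ * ‖y‖₊ : ℝ≥0) : ℝ≥0∞) := ENNReal.coe_le_coe.2 h1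
            _ = (‖fderiv ℝ g (x - s • y)‖₊ : ℝ≥0∞) * ‖y‖₊ := ENNReal.coe_mul _ _
  have hmink := minkowski_L2 (volume : Measure E) ν F hFmeas
  have hinner : ∀ s : ℝ, (∫⁻ x, (F x s) ^ (2:ℝ)) ^ (1/2:ℝ) =
      ENNReal.ofReal ‖y‖ * (∫⁻ x, ((‖fderiv ℝ g x‖₊ : ℝ≥0∞)) ^ (2:ℝ)) ^ (1/2:ℝ) := by
    intro s
    have hc' : Continuous fun x : E => ((‖fderiv ℝ g (x - s • y)‖₊ : ℝ≥0∞)) ^ (2:ℝ) :=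
      ENNReal.continuous_rpow_const.comp
        (ENNReal.continuous_coe.comp (hDcont.comp (continuous_id.sub continuous_const)).nnnorm)
    have h1 : ∫⁻ x, (F x s) ^ (2:ℝ) =
        (∫⁻ x, ((‖fderiv ℝ g x‖₊ : ℝ≥0∞)) ^ (2:ℝ)) * ((‖y‖₊ : ℝ≥0∞)) ^ (2:ℝ) := by
      simp_rw [hF, ENNReal.mul_rpow_of_nonneg _ _ (by norm_num : (0:ℝ) ≤ 2)]
      rw [lintegral_mul_const _ hc'.measurable,
        lintegral_sub_right_eq_self (fun x : E => ((‖fderiv ℝ g x‖₊ : ℝ≥0∞)) ^ (2:ℝ)) (s • y)]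
    rw [h1, ENNReal.mul_rpow_of_nonneg _ _ (by norm_num : (0:ℝ) ≤ 1/2), mul_comm]
    congr 1
    rw [← ENNReal.rpow_mul]
    norm_num [enorm_eq_nnnorm]
  calc (∫⁻ x, ((‖g (x - y) - g x‖₊ : ℝ≥0∞)) ^ (2:ℝ)) ^ (1/2:ℝ)
      ≤ (∫⁻ x, (∫⁻ s, F x s ∂ν) ^ (2:ℝ)) ^ (1/2:ℝ) := by
        refine ENNReal.rpow_le_rpow (lintegral_mono fun x => ?_) (by norm_num)
        exact ENNReal.rpow_le_rpow (hpt x) (by norm_num)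
    _ ≤ ∫⁻ s, (∫⁻ x, (F x s) ^ (2:ℝ)) ^ (1/2:ℝ) ∂ν := hmink
    _ = ∫⁻ _, (ENNReal.ofReal ‖y‖ *
          (∫⁻ x, ((‖fderiv ℝ g x‖₊ : ℝ≥0∞)) ^ (2:ℝ)) ^ (1/2:ℝ)) ∂ν := by
        exact lintegral_congr fun s => hinner s
    _ = ENNReal.ofReal ‖y‖ * (∫⁻ x, ((‖fderiv ℝ g x‖₊ : ℝ≥0∞)) ^ (2:ℝ)) ^ (1/2:ℝ) := by
        rw [lintegral_const, Measure.restrict_apply_univ, Real.volume_Ioc]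
        norm_num


-- pulling out a constant from an L2 lintegral
lemma pull_const {α : Type*} [MeasurableSpace α] (μ : Measure α) (u : α → ℝ≥0∞)
    (hu : Measurable u) (c : ℝ≥0∞) :
    (∫⁻ x, (u x * c) ^ (2:ℝ) ∂μ) ^ (1/2:ℝ) = (∫⁻ x, (u x) ^ (2:ℝ) ∂μ) ^ (1/2:ℝ) * c := by
  simp_rw [ENNReal.mul_rpow_of_nonneg _ _ (by norm_num : (0:ℝ) ≤ 2)]
  rw [lintegral_mul_const (f := fun x => u x ^ (2:ℝ)) _
    (ENNReal.continuous_rpow_const.measurable.comp hu),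
    ENNReal.mul_rpow_of_nonneg _ _ (by norm_num : (0:ℝ) ≤ 1/2), ← ENNReal.rpow_mul]
  norm_num

lemma eLpNorm_two_eq (h : E → ℝ) :
    eLpNorm h 2 volume = (∫⁻ x, ((‖h x‖₊ : ℝ≥0∞)) ^ (2:ℝ)) ^ (1/2:ℝ) := by
  rw [eLpNorm_eq_lintegral_rpow_enorm_toReal (by norm_num) (by norm_num)]
  norm_num [enorm_eq_nnnorm]


end HELP


set_option maxHeartbeats 1600000 in
theorem stmt_10 (n : ℕ) (hn : 1 ≤ n) (σ : ℝ) (hσ : 0 < σ)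
    (f : EuclideanSpace ℝ (Fin n) → ℝ) (hf : Integrable f)
    (P : ℝ) (hP : P = ∫ x, f x)
    (G : ℝ → EuclideanSpace ℝ (Fin n) → ℝ)
    (hGsmooth : ∀ t : ℝ, 0 < t → ContDiff ℝ (⊤ : ℕ∞) (G t))
    (hGL2 : ∀ t : ℝ, 0 < t → MemLp (G t) 2 volume)
    (hDGL2 : ∀ t : ℝ, 0 < t → MemLp (fun x => ‖fderiv ℝ (G t) x‖) 2 volume)
    (C : ℝ) (hC : 0 < C)
    (hDGbound : ∀ t : ℝ, 0 < t →
      eLpNorm (fun x => ‖fderiv ℝ (G t) x‖) 2 volume ≤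
        ENNReal.ofReal (C * t ^ (-(n : ℝ) / (4 * σ) - 1 / (2 * σ))))
    (hGbound : ∀ t : ℝ, 0 < t →
      eLpNorm (G t) 2 volume ≤ ENNReal.ofReal (C * t ^ (-(n : ℝ) / (4 * σ)))) :
    (∃ C' : ℝ, 0 < C' ∧ ∀ t : ℝ, 0 < t →
      eLpNorm (fun x => (∫ y, G t (x - y) * f y) - P * G t x) 2 volume ≤
        ENNReal.ofReal (C' * (t ^ (-(n : ℝ) / (4 * σ) - 1 / (4 * σ)) * (∫ y, |f y|) +
          t ^ (-(n : ℝ) / (4 * σ)) *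
            ∫ y in {y : EuclideanSpace ℝ (Fin n) | t ^ (1 / (4 * σ)) ≤ ‖y‖}, |f y|))) ∧
    Tendsto (fun t : ℝ => t ^ ((n : ℝ) / (4 * σ)) *
        (eLpNorm (fun x => (∫ y, G t (x - y) * f y) - P * G t x) 2 volume).toReal)
      atTop (nhds 0) := by
  have hσ4 : (4:ℝ) * σ ≠ 0 := by positivity
  set e0 : ℝ := -(n : ℝ) / (4 * σ) with he0
  set e1 : ℝ := -(n : ℝ) / (4 * σ) - 1 / (2 * σ) with he1
  set ea : ℝ := -(n : ℝ) / (4 * σ) - 1 / (4 * σ) with hea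
  -- measurable version of f
  obtain ⟨f', hf'meas, hff'⟩ : ∃ f', StronglyMeasurable f' ∧ f =ᵐ[volume] f' :=
    ⟨hf.1.mk f, hf.1.stronglyMeasurable_mk, hf.1.ae_eq_mk⟩
  set W : EuclideanSpace ℝ (Fin n) → ℝ≥0∞ := fun y => (‖f' y‖₊ : ℝ≥0∞) with hW
  have hWmeas : Measurable W := hf'meas.measurable.nnnorm.coe_nnreal_ennreal
  have hWf : ∀ᵐ y : EuclideanSpace ℝ (Fin n), (‖f y‖₊ : ℝ≥0∞) = W y := by
    filter_upwards [hff'] with y hy; rw [hW]; simp [hy]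
  have hLF : ∫⁻ y, W y = ENNReal.ofReal (∫ y, |f y|) := by
    rw [← lintegral_congr_ae hWf]
    simp_rw [← enorm_eq_nnnorm]
    rw [← ofReal_integral_norm_eq_lintegral_enorm hf]
    simp [Real.norm_eq_abs]
  -- the tail integral of |f| over {‖y‖ ≥ R}
  have hTmeas : ∀ R : ℝ, MeasurableSet {y : EuclideanSpace ℝ (Fin n) | R ≤ ‖y‖} := fun R =>
    measurableSet_le measurable_const measurable_norm
  have hLT : ∀ R : ℝ, ∫⁻ y in {y : EuclideanSpace ℝ (Fin n) | R ≤ ‖y‖}, W y =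
      ENNReal.ofReal (∫ y in {y : EuclideanSpace ℝ (Fin n) | R ≤ ‖y‖}, |f y|) := by
    intro R
    rw [← lintegral_congr_ae (ae_restrict_of_ae hWf)]
    simp_rw [← enorm_eq_nnnorm]
    rw [← ofReal_integral_norm_eq_lintegral_enorm hf.restrict]
    simp [Real.norm_eq_abs]
  have hint_nonneg : 0 ≤ ∫ y, |f y| := integral_nonneg fun y => abs_nonneg _
  have htail_nonneg : ∀ R : ℝ,
      0 ≤ ∫ y in {y : EuclideanSpace ℝ (Fin n) | R ≤ ‖y‖}, |f y| := fun R =>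
    integral_nonneg fun y => abs_nonneg _
  -- MAIN ESTIMATE
  have hmain : ∀ t : ℝ, 0 < t →
      eLpNorm (fun x => (∫ y, G t (x - y) * f y) - P * G t x) 2 volume ≤
        ENNReal.ofReal ((2*C) * (t ^ ea * (∫ y, |f y|) +
          t ^ e0 * ∫ y in {y : EuclideanSpace ℝ (Fin n) | t ^ (1 / (4 * σ)) ≤ ‖y‖}, |f y|)) := by
    intro t ht
    set g : EuclideanSpace ℝ (Fin n) → ℝ := G t with hg
    have hgsm : ContDiff ℝ (⊤ : ℕ∞) g := hGsmooth t ht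
    have hgc : Continuous g := hgsm.continuous
    have hDc : Continuous (fderiv ℝ g) := hgsm.continuous_fderiv (by simp)
    set R : ℝ := t ^ (1 / (4 * σ)) with hR
    have hRpos : 0 < R := Real.rpow_pos_of_pos ht _
    set T : Set (EuclideanSpace ℝ (Fin n)) := {y | R ≤ ‖y‖} with hT
    have hTm : MeasurableSet T := hTmeas R
    set Φ : EuclideanSpace ℝ (Fin n) → EuclideanSpace ℝ (Fin n) → ℝ≥0∞ :=
      fun x y => (‖g (x - y) - g x‖₊ : ℝ≥0∞) with hΦ
    have hΦmeas : Measurable (uncurry Φ) := by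
      have : Continuous fun p : EuclideanSpace ℝ (Fin n) × EuclideanSpace ℝ (Fin n) =>
          ((‖g (p.1 - p.2) - g p.1‖₊ : ℝ≥0∞)) :=
        ENNReal.continuous_coe.comp
          (((hgc.comp (continuous_fst.sub continuous_snd)).sub (hgc.comp continuous_fst)).nnnorm)
      exact this.measurable
    set W1 : EuclideanSpace ℝ (Fin n) → ℝ≥0∞ := Tᶜ.indicator W with hW1
    set W2 : EuclideanSpace ℝ (Fin n) → ℝ≥0∞ := T.indicator W with hW2
    have hW1meas : Measurable W1 := hWmeas.indicator hTm.compl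
    have hW2meas : Measurable W2 := hWmeas.indicator hTm
    have hW12 : ∀ y, W1 y + W2 y = W y := by
      intro y
      by_cases hy : y ∈ T
      · simp [hW1, hW2, Set.indicator_of_mem hy,
          Set.indicator_of_notMem (Set.notMem_compl_iff.2 hy)]
      · simp [hW1, hW2, Set.indicator_of_notMem hy, Set.indicator_of_mem (Set.mem_compl hy)]
    set F1 : EuclideanSpace ℝ (Fin n) → EuclideanSpace ℝ (Fin n) → ℝ≥0∞ :=
      fun x y => Φ x y * W1 y with hF1
    set F2 : EuclideanSpace ℝ (Fin n) → EuclideanSpace ℝ (Fin n) → ℝ≥0∞ :=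
      fun x y => Φ x y * W2 y with hF2
    have hF1meas : Measurable (uncurry F1) := hΦmeas.mul (hW1meas.comp measurable_snd)
    have hF2meas : Measurable (uncurry F2) := hΦmeas.mul (hW2meas.comp measurable_snd)
    set K : EuclideanSpace ℝ (Fin n) → ℝ≥0∞ := fun x => ∫⁻ y, Φ x y * W y with hK
    set I1 : EuclideanSpace ℝ (Fin n) → ℝ≥0∞ := fun x => ∫⁻ y, F1 x y with hI1
    set I2 : EuclideanSpace ℝ (Fin n) → ℝ≥0∞ := fun x => ∫⁻ y, F2 x y with hI2
    have hI1meas : Measurable I1 := hF1meas.lintegral_prod_right'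
    have hI2meas : Measurable I2 := hF2meas.lintegral_prod_right'
    have hKsplit : ∀ x, K x = I1 x + I2 x := by
      intro x
      have hm : Measurable fun y => Φ x y * W1 y :=
        ((hΦmeas.comp (measurable_const.prodMk measurable_id)).mul hW1meas)
      calc K x = ∫⁻ y, (Φ x y * W1 y + Φ x y * W2 y) := by
            refine lintegral_congr fun y => ?_
            rw [← mul_add, hW12]
        _ = (∫⁻ y, Φ x y * W1 y) + ∫⁻ y, Φ x y * W2 y := lintegral_add_left hm _
        _ = I1 x + I2 x := rfl
    -- the L² norms of the pieces
    set ND : ℝ≥0∞ := (∫⁻ x, ((‖fderiv ℝ g x‖₊ : ℝ≥0∞)) ^ (2:ℝ)) ^ (1/2:ℝ) with hND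
    set NG : ℝ≥0∞ := (∫⁻ x, ((‖g x‖₊ : ℝ≥0∞)) ^ (2:ℝ)) ^ (1/2:ℝ) with hNG
    have hNDle : ND ≤ ENNReal.ofReal (C * t ^ e1) := by
      have h := hDGbound t ht
      rw [eLpNorm_two_eq (fun x => ‖fderiv ℝ (G t) x‖)] at h
      rw [hND]
      simpa [nnnorm_norm] using h
    have hNGle : NG ≤ ENNReal.ofReal (C * t ^ e0) := by
      have h := hGbound t ht
      rw [eLpNorm_two_eq (G t)] at h
      rw [hNG]
      simpa using h
    -- per-y L² bound for piece 1
    have hΦ1 : ∀ y : EuclideanSpace ℝ (Fin n), y ∈ Tᶜ →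
        (∫⁻ x, (Φ x y) ^ (2:ℝ)) ^ (1/2:ℝ) ≤ ENNReal.ofReal R * ND := by
      intro y hy
      have h1 := trans_L2 g hgsm y
      have h2 : ENNReal.ofReal ‖y‖ ≤ ENNReal.ofReal R :=
        ENNReal.ofReal_le_ofReal (le_of_lt (by simpa [hT] using hy))
      exact le_trans h1 (mul_le_mul_left h2 _)
    -- per-y L² bound for piece 2
    have hΦ2 : ∀ y : EuclideanSpace ℝ (Fin n),
        (∫⁻ x, (Φ x y) ^ (2:ℝ)) ^ (1/2:ℝ) ≤ 2 * NG := by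
      intro y
      have hptw : ∀ x, Φ x y ≤ (‖g (x - y)‖₊ : ℝ≥0∞) + (‖g x‖₊ : ℝ≥0∞) := by
        intro x
        rw [hΦ, ← ENNReal.coe_add]
        exact ENNReal.coe_le_coe.2 (nnnorm_sub_le _ _)
      have hmeas1 : AEMeasurable (fun x : EuclideanSpace ℝ (Fin n) => (‖g (x - y)‖₊ : ℝ≥0∞))
          volume :=
        (ENNReal.continuous_coe.comp ((hgc.comp (continuous_id.sub continuous_const)).nnnorm)).measurable.aemeasurable
      have hmeas2 : AEMeasurable (fun x : EuclideanSpace ℝ (Fin n) => (‖g x‖₊ : ℝ≥0∞)) volume :=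
        (ENNReal.continuous_coe.comp (hgc.nnnorm)).measurable.aemeasurable
      calc (∫⁻ x, (Φ x y) ^ (2:ℝ)) ^ (1/2:ℝ)
          ≤ (∫⁻ x, ((‖g (x - y)‖₊ : ℝ≥0∞) + (‖g x‖₊ : ℝ≥0∞)) ^ (2:ℝ)) ^ (1/2:ℝ) := by
            refine ENNReal.rpow_le_rpow (lintegral_mono fun x =>
              ENNReal.rpow_le_rpow (hptw x) (by norm_num)) (by norm_num)
        _ ≤ (∫⁻ x, ((‖g (x - y)‖₊ : ℝ≥0∞)) ^ (2:ℝ)) ^ (1/2:ℝ) +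
              (∫⁻ x, ((‖g x‖₊ : ℝ≥0∞)) ^ (2:ℝ)) ^ (1/2:ℝ) :=
            ENNReal.lintegral_Lp_add_le hmeas1 hmeas2 (by norm_num)
        _ = 2 * NG := by
            rw [lintegral_sub_right_eq_self
              (fun x : EuclideanSpace ℝ (Fin n) => ((‖g x‖₊ : ℝ≥0∞)) ^ (2:ℝ)) y, ← hNG]
            ring
    -- Minkowski for both pieces
    have hminkS1 : (∫⁻ x, (I1 x) ^ (2:ℝ)) ^ (1/2:ℝ) ≤
        ENNReal.ofReal R * ND * ∫⁻ y, W y := by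
      calc (∫⁻ x, (I1 x) ^ (2:ℝ)) ^ (1/2:ℝ)
          ≤ ∫⁻ y, (∫⁻ x, (F1 x y) ^ (2:ℝ)) ^ (1/2:ℝ) := minkowski_L2 volume volume F1 hF1meas
        _ ≤ ∫⁻ y, ENNReal.ofReal R * ND * W y := by
            refine lintegral_mono fun y => ?_
            have hpull : (∫⁻ x, (F1 x y) ^ (2:ℝ)) ^ (1/2:ℝ) =
                (∫⁻ x, (Φ x y) ^ (2:ℝ)) ^ (1/2:ℝ) * W1 y := by
              rw [hF1]
              exact pull_const volume (fun x => Φ x y) (by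
                exact hΦmeas.comp (measurable_id.prodMk measurable_const)) (W1 y)
            rw [hpull]
            by_cases hy : y ∈ Tᶜ
            · have hle := hΦ1 y hy
              have : W1 y ≤ W y := by
                rw [hW1]; exact Set.indicator_le_self _ _ y
              calc (∫⁻ x, (Φ x y) ^ (2:ℝ)) ^ (1/2:ℝ) * W1 y
                  ≤ (ENNReal.ofReal R * ND) * W y := mul_le_mul' hle this
                _ = ENNReal.ofReal R * ND * W y := rfl
            · have : W1 y = 0 := Set.indicator_of_notMem hy _
              simp [this]
        _ = ENNReal.ofReal R * ND * ∫⁻ y, W y := lintegral_const_mul _ hWmeas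
    have hminkS2 : (∫⁻ x, (I2 x) ^ (2:ℝ)) ^ (1/2:ℝ) ≤
        2 * NG * ∫⁻ y in T, W y := by
      calc (∫⁻ x, (I2 x) ^ (2:ℝ)) ^ (1/2:ℝ)
          ≤ ∫⁻ y, (∫⁻ x, (F2 x y) ^ (2:ℝ)) ^ (1/2:ℝ) := minkowski_L2 volume volume F2 hF2meas
        _ ≤ ∫⁻ y, 2 * NG * W2 y := by
            refine lintegral_mono fun y => ?_
            have hpull : (∫⁻ x, (F2 x y) ^ (2:ℝ)) ^ (1/2:ℝ) =
                (∫⁻ x, (Φ x y) ^ (2:ℝ)) ^ (1/2:ℝ) * W2 y := by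
              rw [hF2]
              exact pull_const volume (fun x => Φ x y) (by
                exact hΦmeas.comp (measurable_id.prodMk measurable_const)) (W2 y)
            rw [hpull]
            exact mul_le_mul' (hΦ2 y) le_rfl
        _ = 2 * NG * ∫⁻ y, W2 y := lintegral_const_mul _ hW2meas
        _ = 2 * NG * ∫⁻ y in T, W y := by rw [hW2, lintegral_indicator hTm]
    -- combine
    have hSq : (∫⁻ x, (K x) ^ (2:ℝ)) ^ (1/2:ℝ) ≤
        ENNReal.ofReal R * ND * (∫⁻ y, W y) + 2 * NG * ∫⁻ y in T, W y := by
      calc (∫⁻ x, (K x) ^ (2:ℝ)) ^ (1/2:ℝ)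
          = (∫⁻ x, (I1 x + I2 x) ^ (2:ℝ)) ^ (1/2:ℝ) := by simp only [hKsplit]
        _ ≤ (∫⁻ x, (I1 x) ^ (2:ℝ)) ^ (1/2:ℝ) + (∫⁻ x, (I2 x) ^ (2:ℝ)) ^ (1/2:ℝ) :=
            ENNReal.lintegral_Lp_add_le hI1meas.aemeasurable hI2meas.aemeasurable (by norm_num)
        _ ≤ ENNReal.ofReal R * ND * (∫⁻ y, W y) + 2 * NG * ∫⁻ y in T, W y :=
            add_le_add hminkS1 hminkS2
    -- numeric bound on RHS
    have hRND : ENNReal.ofReal R * ND * (∫⁻ y, W y) ≤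
        ENNReal.ofReal (C * t ^ ea * ∫ y, |f y|) := by
      rw [hLF]
      calc ENNReal.ofReal R * ND * ENNReal.ofReal (∫ y, |f y|)
          ≤ ENNReal.ofReal R * ENNReal.ofReal (C * t ^ e1) * ENNReal.ofReal (∫ y, |f y|) :=
            mul_le_mul' (mul_le_mul' le_rfl hNDle) le_rfl
        _ = ENNReal.ofReal (R * (C * t ^ e1) * ∫ y, |f y|) := by
            rw [← ENNReal.ofReal_mul hRpos.le, ← ENNReal.ofReal_mul (by positivity)]
        _ = ENNReal.ofReal (C * t ^ ea * ∫ y, |f y|) := by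
            congr 1
            have hexp : R * (C * t ^ e1) = C * t ^ ea := by
              rw [hR, he1, hea, mul_comm C _, ← mul_assoc, ← Real.rpow_add ht,
                show (1:ℝ) / (4*σ) + (-(n:ℝ)/(4*σ) - 1/(2*σ)) =
                  -(n:ℝ)/(4*σ) - 1/(4*σ) from by field_simp; ring]
              ring
            rw [hexp]
    have hNG2 : 2 * NG * (∫⁻ y in T, W y) ≤
        ENNReal.ofReal (2 * (C * t ^ e0) *
          ∫ y in {y : EuclideanSpace ℝ (Fin n) | R ≤ ‖y‖}, |f y|) := by
      rw [hT, hLT R]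
      calc (2:ℝ≥0∞) * NG * ENNReal.ofReal (∫ y in {y : EuclideanSpace ℝ (Fin n) | R ≤ ‖y‖}, |f y|)
          ≤ ENNReal.ofReal 2 * ENNReal.ofReal (C * t ^ e0) *
              ENNReal.ofReal (∫ y in {y : EuclideanSpace ℝ (Fin n) | R ≤ ‖y‖}, |f y|) := by
            refine mul_le_mul' (mul_le_mul' (le_of_eq ?_) hNGle) le_rfl
            simp [ENNReal.ofReal_ofNat]
        _ = ENNReal.ofReal (2 * (C * t ^ e0) *
              ∫ y in {y : EuclideanSpace ℝ (Fin n) | R ≤ ‖y‖}, |f y|) := by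
            rw [← ENNReal.ofReal_mul (by norm_num), ← ENNReal.ofReal_mul (by positivity)]
    -- total bound on Sq
    have htot : (∫⁻ x, (K x) ^ (2:ℝ)) ^ (1/2:ℝ) ≤
        ENNReal.ofReal ((2*C) * (t ^ ea * (∫ y, |f y|) +
          t ^ e0 * ∫ y in {y : EuclideanSpace ℝ (Fin n) | R ≤ ‖y‖}, |f y|)) := by
      refine le_trans hSq (le_trans (add_le_add hRND hNG2) ?_)
      rw [← ENNReal.ofReal_add (by positivity) (by
        have := htail_nonneg R; positivity)]
      refine ENNReal.ofReal_le_ofReal ?_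
      have h1 : 0 ≤ C * t ^ ea * ∫ y, |f y| := by positivity
      have h2 := htail_nonneg R
      have h3 : (0:ℝ) ≤ t ^ ea := (Real.rpow_pos_of_pos ht ea).le
      nlinarith [Real.rpow_pos_of_pos ht e0, htail_nonneg R, hint_nonneg,
        mul_nonneg (mul_nonneg hC.le h3) hint_nonneg]
    -- finiteness and a.e. pointwise bound
    have hKmeas : Measurable K :=
      Measurable.lintegral_prod_right' (hΦmeas.mul (hWmeas.comp measurable_snd))
    have hK2fin : (∫⁻ x, (K x) ^ (2:ℝ)) ≠ ∞ := by
      intro hcon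
      rw [hcon, ENNReal.top_rpow_of_pos (by norm_num : (0:ℝ) < 1/2)] at htot
      exact (lt_irrefl (⊤:ℝ≥0∞) (lt_of_le_of_lt htot ENNReal.ofReal_lt_top)).elim
    have hKae : ∀ᵐ x : EuclideanSpace ℝ (Fin n), K x ≠ ∞ := by
      have h1 : ∀ᵐ x : EuclideanSpace ℝ (Fin n), (K x) ^ (2:ℝ) < ∞ :=
        ae_lt_top (ENNReal.continuous_rpow_const.measurable.comp hKmeas) hK2fin
      filter_upwards [h1] with x hx hcon
      rw [hcon, ENNReal.top_rpow_of_pos (by norm_num : (0:ℝ) < 2)] at hx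
      exact lt_irrefl _ hx
    have hbound : ∀ᵐ x : EuclideanSpace ℝ (Fin n),
        (‖(∫ y, g (x - y) * f y) - P * g x‖₊ : ℝ≥0∞) ≤ K x := by
      filter_upwards [hKae] with x hKx
      have hKx' : (∫⁻ y, (‖(g (x - y) - g x) * f y‖₊ : ℝ≥0∞)) = K x := by
        rw [hK]
        refine lintegral_congr_ae ?_
        filter_upwards [hWf] with y hy
        rw [nnnorm_mul, ENNReal.coe_mul, hy]
      have hint1 : Integrable fun y : EuclideanSpace ℝ (Fin n) => (g (x - y) - g x) * f y := by
        constructor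
        · exact (((hgc.comp (continuous_const.sub continuous_id)).sub
            continuous_const).aestronglyMeasurable).mul hf.1
        · show (∫⁻ y, (‖(g (x - y) - g x) * f y‖₊ : ℝ≥0∞)) < ∞
          rw [hKx']
          exact lt_top_iff_ne_top.2 hKx
      have hint2 : Integrable fun y : EuclideanSpace ℝ (Fin n) => g x * f y := hf.const_mul _
      have heq : (fun y : EuclideanSpace ℝ (Fin n) => g (x - y) * f y) =
          fun y => (g (x - y) - g x) * f y + g x * f y := by
        funext y; ring
      have hi : ∫ y, g (x - y) * f y =
          (∫ y, (g (x - y) - g x) * f y) + g x * ∫ y, f y := by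
        rw [heq, integral_add hint1 hint2, integral_const_mul]
      have hsub : (∫ y, g (x - y) * f y) - P * g x = ∫ y, (g (x - y) - g x) * f y := by
        rw [hi, hP]; ring
      rw [hsub]
      calc (‖∫ y, (g (x - y) - g x) * f y‖₊ : ℝ≥0∞)
          ≤ ∫⁻ y, (‖(g (x - y) - g x) * f y‖₊ : ℝ≥0∞) := enorm_integral_le_lintegral_enorm _
        _ = K x := hKx'
    -- conclude
    calc eLpNorm (fun x => (∫ y, G t (x - y) * f y) - P * G t x) 2 volume
        = (∫⁻ x, ((‖(∫ y, g (x - y) * f y) - P * g x‖₊ : ℝ≥0∞)) ^ (2:ℝ)) ^ (1/2:ℝ) :=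
          eLpNorm_two_eq _
      _ ≤ (∫⁻ x, (K x) ^ (2:ℝ)) ^ (1/2:ℝ) := by
          refine ENNReal.rpow_le_rpow (lintegral_mono_ae ?_) (by norm_num)
          filter_upwards [hbound] with x hx
          exact ENNReal.rpow_le_rpow hx (by norm_num)
      _ ≤ _ := htot
  refine ⟨⟨2*C, by positivity, fun t ht => hmain t ht⟩, ?_⟩
  -- Part 2: decay
  have h4σ : (0:ℝ) < 1 / (4*σ) := by positivity
  have h1 : Tendsto (fun t : ℝ => t ^ (-(1/(4*σ)))) atTop (nhds 0) :=
    tendsto_rpow_neg_atTop h4σ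
  have h2 : Tendsto (fun t : ℝ =>
      ∫ y in {y : EuclideanSpace ℝ (Fin n) | t ^ (1/(4*σ)) ≤ ‖y‖}, |f y|) atTop (nhds 0) := by
    have hconv := tendsto_integral_filter_of_dominated_convergence (μ := volume)
      (l := (atTop : Filter ℝ))
      (F := fun t (y : EuclideanSpace ℝ (Fin n)) =>
        Set.indicator {y : EuclideanSpace ℝ (Fin n) | t ^ (1/(4*σ)) ≤ ‖y‖} (fun y => |f y|) y)
      (f := fun _ => (0:ℝ)) (bound := fun y => |f y|)
      (Eventually.of_forall fun t =>
        (hf.abs.aestronglyMeasurable).indicator (hTmeas _))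
      (Eventually.of_forall fun t => Eventually.of_forall fun y => by
        calc ‖Set.indicator {y : EuclideanSpace ℝ (Fin n) | t ^ (1/(4*σ)) ≤ ‖y‖}
              (fun y => |f y|) y‖ ≤ ‖|f y|‖ := norm_indicator_le_norm_self _ _
          _ = |f y| := by simp [Real.norm_eq_abs, abs_abs])
      hf.abs
      (Eventually.of_forall fun y => by
        have hev : ∀ᶠ t in (atTop : Filter ℝ), ‖y‖ < t ^ (1/(4*σ)) :=
          (tendsto_rpow_atTop h4σ).eventually_gt_atTop ‖y‖
        refine Tendsto.congr' ?_ tendsto_const_nhds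
        filter_upwards [hev] with t htv
        have hmem : y ∉ {y : EuclideanSpace ℝ (Fin n) | t ^ (1/(4*σ)) ≤ ‖y‖} := by
          simp only [Set.mem_setOf_eq, not_le]
          exact htv
        exact (Set.indicator_of_notMem hmem _).symm)
    rw [integral_zero] at hconv
    refine hconv.congr fun t => ?_
    exact integral_indicator (hTmeas _)
  have hu0 : Tendsto (fun t : ℝ => (2*C) * (t ^ (-(1/(4*σ))) * (∫ y, |f y|) +
      ∫ y in {y : EuclideanSpace ℝ (Fin n) | t ^ (1/(4*σ)) ≤ ‖y‖}, |f y|)) atTop (nhds 0) := by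
    have h3 := ((h1.mul_const (∫ y, |f y|)).add h2).const_mul (2*C)
    have h0 : (2*C) * ((0:ℝ) * (∫ y, |f y|) + 0) = 0 := by ring
    rw [← h0]
    exact h3
  refine squeeze_zero' ?_ ?_ hu0
  · filter_upwards [eventually_ge_atTop (0:ℝ)] with t ht
    exact mul_nonneg (Real.rpow_nonneg ht _) ENNReal.toReal_nonneg
  · filter_upwards [eventually_gt_atTop (0:ℝ)] with t ht
    have hb := hmain t ht
    have hnn : 0 ≤ (2*C) * (t ^ ea * (∫ y, |f y|) +
        t ^ e0 * ∫ y in {y : EuclideanSpace ℝ (Fin n) | t ^ (1/(4*σ)) ≤ ‖y‖}, |f y|) := by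
      have h5 := htail_nonneg (t ^ (1/(4*σ)))
      have h6 : (0:ℝ) ≤ t ^ ea := (Real.rpow_pos_of_pos ht ea).le
      have h7 : (0:ℝ) ≤ t ^ e0 := (Real.rpow_pos_of_pos ht e0).le
      positivity
    have htr : (eLpNorm (fun x => (∫ y, G t (x - y) * f y) - P * G t x) 2 volume).toReal ≤
        (2*C) * (t ^ ea * (∫ y, |f y|) +
          t ^ e0 * ∫ y in {y : EuclideanSpace ℝ (Fin n) | t ^ (1/(4*σ)) ≤ ‖y‖}, |f y|) :=
      ENNReal.toReal_le_of_le_ofReal hnn hb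
    have hx1 : t ^ ((n:ℝ)/(4*σ)) * t ^ ea = t ^ (-(1/(4*σ))) := by
      rw [← Real.rpow_add ht, hea]
      congr 1
      ring
    have hx2 : t ^ ((n:ℝ)/(4*σ)) * t ^ e0 = 1 := by
      rw [← Real.rpow_add ht, he0, show (n:ℝ)/(4*σ) + -(n:ℝ)/(4*σ) = 0 by ring,
        Real.rpow_zero]
    calc t ^ ((n:ℝ)/(4*σ)) *
          (eLpNorm (fun x => (∫ y, G t (x - y) * f y) - P * G t x) 2 volume).toReal
        ≤ t ^ ((n:ℝ)/(4*σ)) * ((2*C) * (t ^ ea * (∫ y, |f y|) +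
            t ^ e0 * ∫ y in {y : EuclideanSpace ℝ (Fin n) | t ^ (1/(4*σ)) ≤ ‖y‖}, |f y|)) :=
          mul_le_mul_of_nonneg_left htr (Real.rpow_nonneg ht.le _)
      _ = (2*C) * ((t ^ ((n:ℝ)/(4*σ)) * t ^ ea) * (∫ y, |f y|) +
            (t ^ ((n:ℝ)/(4*σ)) * t ^ e0) *
              ∫ y in {y : EuclideanSpace ℝ (Fin n) | t ^ (1/(4*σ)) ≤ ‖y‖}, |f y|) := by ring
      _ = (2*C) * (t ^ (-(1/(4*σ))) * (∫ y, |f y|) +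
            ∫ y in {y : EuclideanSpace ℝ (Fin n) | t ^ (1/(4*σ)) ≤ ‖y‖}, |f y|) := by
          rw [hx1, hx2]
          ring
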